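/- Let M:(ℝ,≤)²→vect_F be a pointwise finite-dimensional persistence module admitting a finite convex isotopy subdivision of (ℝ,≤)² subordinate to M, with poset of chambers (P,≤) and chamber map F_M:(ℝ,≤)²→(P,≤). Then the pullback functor F_M^*: vect_F^{(P,≤)} → vect_F^{(ℝ,≤)²}, sending a functor N:(P,≤)→vect_F to N ∘ F_M, is fully faithful. -/

import Mathlib

/-- A persistence module over a preorder `P` with coefficients in a field `F`:
a functor `(P,≤) → Vect_F`, given by vector spaces `V p` and linear maps
`map : i ≤ j → (V i →ₗ[F] V j)` satisfying the functoriality equations. -/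
structure PersistenceModule (F : Type) [Field F] (P : Type) [Preorder P] where
  V : P → Type
  [addCommGroup : ∀ p, AddCommGroup (V p)]
  [module : ∀ p, Module F (V p)]
  map : ∀ {i j : P}, i ≤ j → (V i →ₗ[F] V j)
  map_id : ∀ i : P, map (le_refl i) = LinearMap.id
  map_comp : ∀ {i j k : P} (hij : i ≤ j) (hjk : j ≤ k),
    (map hjk).comp (map hij) = map (hij.trans hjk)

attribute [instance] PersistenceModule.addCommGroup PersistenceModule.module

/-- A zigzag path `a - x₁ - ⋯ - xₙ - b` in a preorder, where each consecutive
pair of points is comparable. -/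
inductive Zigzag (P : Type) [Preorder P] : P → P → Type
  | single (a : P) : Zigzag P a a
  | consLe {a b c : P} (h : a ≤ b) (p : Zigzag P b c) : Zigzag P a c
  | consGe {a b c : P} (h : b ≤ a) (p : Zigzag P b c) : Zigzag P a c

/-- Convexity of a subset of a poset: `i ≤ j ≤ k` with `i, k ∈ J` implies `j ∈ J`. -/
def PosetConvex {P : Type} [Preorder P] (J : Set P) : Prop :=
  ∀ i ∈ J, ∀ k ∈ J, ∀ j : P, i ≤ j → j ≤ k → j ∈ J

/-- Connectedness: any two points of `J` are joined by a finite zigzag path inside `J`. -/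
def ZigzagConnected {P : Type} [Preorder P] (J : Set P) : Prop :=
  ∀ a b : J, Nonempty (Zigzag (↥J) a b)

/-- A morphism of persistence modules (a natural transformation). -/
structure PersHom {F : Type} [Field F] {P : Type} [Preorder P]
    (M N : PersistenceModule F P) where
  app : ∀ p, M.V p →ₗ[F] N.V p
  natural : ∀ {i j : P} (h : i ≤ j), (N.map h).comp (app i) = (app j).comp (M.map h)

/-- The relation `p → q` between chambers of a subdivision `j ↦ C j`:
`p → q` iff `p = q`, or `p ≠ q` and there are `x ∈ J_p`, `y ∈ J_q` with `x ≤ y`. -/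
def chamberRel (C : ℝ × ℝ → Set (ℝ × ℝ)) : Set (ℝ × ℝ) → Set (ℝ × ℝ) → Prop :=
  fun A B => A ∈ Set.range C ∧ B ∈ Set.range C ∧
    (A = B ∨ (A ≠ B ∧ ∃ x ∈ A, ∃ y ∈ B, x ≤ y))

/-- The set of chambers of the subdivision `j ↦ C j`. -/
def ChamberPoset (C : ℝ × ℝ → Set (ℝ × ℝ)) : Type :=
  {A : Set (ℝ × ℝ) // A ∈ Set.range C}

/-- The chambers carry the preorder generated (as reflexive-transitive closure)
by `chamberRel`. -/
instance (C : ℝ × ℝ → Set (ℝ × ℝ)) : Preorder (ChamberPoset C) where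
  le A B := Relation.ReflTransGen (chamberRel C) A.1 B.1
  le_refl A := Relation.ReflTransGen.refl
  le_trans A B D hAB hBD := Relation.ReflTransGen.trans hAB hBD

/-- The map `F_M` sending a point of the plane to its chamber. -/
def chamberMap (C : ℝ × ℝ → Set (ℝ × ℝ)) : ℝ × ℝ → ChamberPoset C :=
  fun j => ⟨C j, ⟨j, rfl⟩⟩

theorem chamberMap_monotone (C : ℝ × ℝ → Set (ℝ × ℝ)) (hmem : ∀ j, j ∈ C j) :
    Monotone (chamberMap C) := by
  intro x y hxy
  show Relation.ReflTransGen (chamberRel C) (C x) (C y)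
  refine Relation.ReflTransGen.single ⟨⟨x, rfl⟩, ⟨y, rfl⟩, ?_⟩
  by_cases h : C x = C y
  · exact Or.inl h
  · exact Or.inr ⟨h, x, hmem x, y, hmem y, hxy⟩

/-- Pullback of a persistence module along a monotone map of parameter posets. -/
def PersistenceModule.pullback {F : Type} [Field F] {Q R : Type} [Preorder Q] [Preorder R]
    (N : PersistenceModule F R) (f : Q → R) (hf : Monotone f) : PersistenceModule F Q where
  V q := N.V (f q)
  addCommGroup _ := inferInstance
  module _ := inferInstance
  map h := N.map (hf h)
  map_id i := N.map_id (f i)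
  map_comp hij hjk := N.map_comp (hf hij) (hf hjk)

/-- The action of the pullback functor `π^*` on morphisms. -/
def pullbackHom {F : Type} [Field F] {Q R : Type} [Preorder Q] [Preorder R]
    {N N' : PersistenceModule F R} (f : Q → R) (hf : Monotone f)
    (α : PersHom N N') : PersHom (N.pullback f hf) (N'.pullback f hf) where
  app q := α.app (f q)
  natural h := α.natural (hf h)

/-!
A morphism `β : f^* N ⟶ f^* N'` has one component for every point of `Q`, and these components
already satisfy the naturality square for every relation `f a ≤ f b` which is reached by a chain of
forward steps of `Q` and backward steps that `f` sends to isomorphisms (along the latter, `N` and `N'` act by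
isomorphisms, so squares can be inverted). When `f` is surjective, picking a preimage of each point
of `R` therefore descends `β` to a morphism `N ⟶ N'`, and surjectivity also gives faithfulness.
For the chamber map, every relation between chambers is reached in this way, because chambers are
zigzag connected and the order on chambers is generated by the relations between their points.
-/

open Function Relation

section Modules

variable {F : Type} [Field F]

@[ext]
theorem PersHom.ext {P : Type} [Preorder P] {M N : PersistenceModule F P} {α β : PersHom M N}
    (h : ∀ p, α.app p = β.app p) : α = β := by
  cases α; cases β
  simp only [PersHom.mk.injEq]
  exact funext h

namespace PersistenceModule

variable {R : Type} [Preorder R]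

theorem map_comp_map_eq_id (M : PersistenceModule F R) {p q : R} (h : p ≤ q) (h' : q ≤ p) :
    (M.map h').comp (M.map h) = LinearMap.id := by
  rw [M.map_comp h h']
  exact M.map_id p

variable (N N' : PersistenceModule F R)

def SquareCommutes {p q : R} (h : p ≤ q) (A : N.V p →ₗ[F] N'.V p) (B : N.V q →ₗ[F] N'.V q) :
    Prop :=
  (N'.map h).comp A = B.comp (N.map h)

variable {N N'}

theorem SquareCommutes.refl {p : R} (h : p ≤ p) (A : N.V p →ₗ[F] N'.V p) :
    SquareCommutes N N' h A A := by
  rw [SquareCommutes, N.map_id, N'.map_id, LinearMap.id_comp, LinearMap.comp_id]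

theorem SquareCommutes.trans {p q r : R} {h₁ : p ≤ q} {h₂ : q ≤ r} {A : N.V p →ₗ[F] N'.V p}
    {B : N.V q →ₗ[F] N'.V q} {D : N.V r →ₗ[F] N'.V r} (s₁ : SquareCommutes N N' h₁ A B)
    (s₂ : SquareCommutes N N' h₂ B D) : SquareCommutes N N' (h₁.trans h₂) A D := by
  rw [SquareCommutes, ← N.map_comp h₁ h₂, ← N'.map_comp h₁ h₂, LinearMap.comp_assoc, s₁,
    ← LinearMap.comp_assoc, s₂, LinearMap.comp_assoc]

theorem squareCommutes_conj {p q : R} (h : p ≤ q) (h' : q ≤ p) (A : N.V q →ₗ[F] N'.V q) :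
    SquareCommutes N N' h ((N'.map h').comp (A.comp (N.map h))) A := by
  rw [SquareCommutes, ← LinearMap.comp_assoc, ← LinearMap.comp_assoc,
    map_comp_map_eq_id N' h' h, LinearMap.id_comp]

theorem SquareCommutes.conj_eq {p q : R} {h' : q ≤ p} {A : N.V q →ₗ[F] N'.V q}
    {B : N.V p →ₗ[F] N'.V p} (s : SquareCommutes N N' h' A B) (h : p ≤ q) :
    (N'.map h').comp (A.comp (N.map h)) = B := by
  rw [← LinearMap.comp_assoc, s, LinearMap.comp_assoc, map_comp_map_eq_id N h h',
    LinearMap.comp_id]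

theorem SquareCommutes.symm {p q : R} {h : p ≤ q} (h' : q ≤ p) {A : N.V p →ₗ[F] N'.V p}
    {B : N.V q →ₗ[F] N'.V q} (s : SquareCommutes N N' h A B) : SquareCommutes N N' h' B A := by
  rw [← s.conj_eq h']
  exact squareCommutes_conj h' h A

end PersistenceModule

open PersistenceModule

section Pullback

variable {Q R : Type} [Preorder Q] [Preorder R]

/-- Forward steps of `Q`, and backward steps that `f` sends to isomorphisms of `R`. -/
def PullbackStep (f : Q → R) (x y : Q) : Prop :=
  x ≤ y ∨ (y ≤ x ∧ f x ≤ f y)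

variable {f : Q → R}

theorem PullbackStep.map_le (hf : Monotone f) {x y : Q} (h : PullbackStep f x y) : f x ≤ f y :=
  h.elim (fun h => hf h) And.right

theorem PullbackStep.map_le_of_reflTransGen (hf : Monotone f) {a b : Q}
    (hab : ReflTransGen (PullbackStep f) a b) : f a ≤ f b := by
  induction hab with
  | refl => exact le_rfl
  | tail _ hstep ih => exact ih.trans (hstep.map_le hf)

variable {N N' : PersistenceModule F R} {hf : Monotone f}

theorem PersHom.squareCommutes_of_reflTransGen
    (β : PersHom (N.pullback f hf) (N'.pullback f hf)) {a b : Q}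
    (hab : ReflTransGen (PullbackStep f) a b) (h : f a ≤ f b) :
    SquareCommutes N N' h (β.app a) (β.app b) := by
  induction hab with
  | refl => exact SquareCommutes.refl h _
  | tail hac hstep ih =>
    have s := ih (PullbackStep.map_le_of_reflTransGen hf hac)
    obtain hcd | ⟨hdc, hfcd⟩ := hstep
    · exact s.trans (β.natural hcd)
    · exact s.trans (SquareCommutes.symm hfcd (β.natural hdc))

theorem Zigzag.reflTransGen_pullbackStep {J : Set Q} (hJ : ∀ x ∈ J, ∀ y ∈ J, f x ≤ f y)
    {a b : J} (z : Zigzag J a b) : ReflTransGen (PullbackStep f) a b := by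
  induction z with
  | single => exact .refl
  | consLe h _ ih => exact .head (Or.inl h) ih
  | consGe h _ ih => exact .head (Or.inr ⟨h, hJ _ (Subtype.prop _) _ (Subtype.prop _)⟩) ih

theorem pullbackHom_injective (hsurj : Surjective f) :
    Injective (fun α : PersHom N N' => pullbackHom f hf α) := by
  intro α α' h
  ext1 p
  obtain ⟨x, rfl⟩ := hsurj p
  exact congrFun (congrArg PersHom.app h) x

theorem pullbackHom_surjective (hsurj : Surjective f)
    (hgen : ∀ a b, f a ≤ f b → ReflTransGen (PullbackStep f) a b) :
    Surjective (fun α : PersHom N N' => pullbackHom f hf α) := by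
  intro β
  let rep := surjInv hsurj
  have hrep : ∀ p, f (rep p) = p := surjInv_eq hsurj
  have hβ : ∀ a b (h : f a ≤ f b), SquareCommutes N N' h (β.app a) (β.app b) :=
    fun a b h => β.squareCommutes_of_reflTransGen (hgen a b h) h
  refine ⟨⟨fun p => (N'.map (hrep p).le).comp ((β.app (rep p)).comp (N.map (hrep p).ge)), ?_⟩, ?_⟩
  · intro p q h
    exact ((squareCommutes_conj (hrep p).ge (hrep p).le _).trans
      (hβ _ _ ((hrep p).le.trans (h.trans (hrep q).ge)))).trans
      (SquareCommutes.symm (hrep q).le (squareCommutes_conj (hrep q).ge (hrep q).le _))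
  · ext1 x
    exact (hβ _ _ (hrep (f x)).le).conj_eq (hrep (f x)).ge

theorem pullbackHom_bijective (hsurj : Surjective f)
    (hgen : ∀ a b, f a ≤ f b → ReflTransGen (PullbackStep f) a b) :
    Bijective (fun α : PersHom N N' => pullbackHom f hf α) :=
  ⟨pullbackHom_injective hsurj, pullbackHom_surjective hsurj hgen⟩

end Pullback

end Modules

section Chambers

variable {C : ℝ × ℝ → Set (ℝ × ℝ)}

theorem chamberMap_surjective : Surjective (chamberMap C) :=
  fun ⟨_, j, hj⟩ => ⟨j, Subtype.ext hj⟩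

theorem chamberMap_eq_of_mem (hpart : ∀ j k, k ∈ C j → C k = C j) {j k : ℝ × ℝ}
    (hk : k ∈ C j) : chamberMap C k = chamberMap C j :=
  Subtype.ext (hpart j k hk)

theorem reflTransGen_pullbackStep_chamberMap_of_mem (hmem : ∀ j, j ∈ C j)
    (hpart : ∀ j k, k ∈ C j → C k = C j) (hconn : ∀ j, ZigzagConnected (C j)) {a b : ℝ × ℝ}
    (hb : b ∈ C a) :
    ReflTransGen (PullbackStep (chamberMap C)) a b := by
  obtain ⟨z⟩ := hconn a ⟨a, hmem a⟩ ⟨b, hb⟩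
  refine z.reflTransGen_pullbackStep fun x hx y hy => ?_
  rw [chamberMap_eq_of_mem hpart hx, chamberMap_eq_of_mem hpart hy]

theorem reflTransGen_pullbackStep_of_chamberMap_le (hmem : ∀ j, j ∈ C j)
    (hpart : ∀ j k, k ∈ C j → C k = C j) (hconn : ∀ j, ZigzagConnected (C j)) {a b : ℝ × ℝ}
    (h : chamberMap C a ≤ chamberMap C b) : ReflTransGen (PullbackStep (chamberMap C)) a b := by
  suffices ∀ B, ReflTransGen (chamberRel C) (C a) B → ∀ b ∈ B,
      ReflTransGen (PullbackStep (chamberMap C)) a b from this _ h b (hmem b)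
  intro B hB
  induction hB with
  | refl => exact fun b hb => reflTransGen_pullbackStep_chamberMap_of_mem hmem hpart hconn hb
  | tail _ hstep ih =>
    obtain ⟨-, ⟨j, rfl⟩, rfl | ⟨-, p, hp, q, hq, hpq⟩⟩ := hstep
    · exact ih
    intro b hb
    have hbq : b ∈ C q := hpart j q hq ▸ hb
    exact ((ih p hp).tail (Or.inl hpq)).trans
      (reflTransGen_pullbackStep_chamberMap_of_mem hmem hpart hconn hbq)

end Chambers

theorem statement13_general (F : Type) [Field F]
    (C : ℝ × ℝ → Set (ℝ × ℝ))
    (hmem : ∀ j, j ∈ C j)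
    (hpart : ∀ j k, k ∈ C j → C k = C j)
    (hconn : ∀ j, ZigzagConnected (C j))
    (N N' : PersistenceModule F (ChamberPoset C)) :
    Function.Bijective
      (fun α : PersHom N N' =>
        pullbackHom (chamberMap C) (chamberMap_monotone C hmem) α) :=
  pullbackHom_bijective chamberMap_surjective fun _ _ =>
    reflTransGen_pullbackStep_of_chamberMap_le hmem hpart hconn

/-- Let `M` be a persistence module on `(ℝ,≤)²` admitting a finite
convex isotopy subdivision (encoded by the chamber map `C`), with poset of chambers
`ChamberPoset C` and chamber map `F_M = chamberMap C`. Then the pullback functor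
`F_M^* : vect_F^{(P,≤)} → vect_F^{(ℝ,≤)²}`, `N ↦ N ∘ F_M`, is fully faithful, i.e.
bijective on hom-sets. -/
theorem statement13 (F : Type) [Field F] (M : PersistenceModule F (ℝ × ℝ))
    (C : ℝ × ℝ → Set (ℝ × ℝ))
    (hmem : ∀ j, j ∈ C j)
    (hpart : ∀ j k, k ∈ C j → C k = C j)
    (hfin : (Set.range C).Finite)
    (hconn : ∀ j, ZigzagConnected (C j))
    (hconv : ∀ j, PosetConvex (C j))
    (hiso : ∀ (j x y : ℝ × ℝ), x ∈ C j → y ∈ C j → ∀ h : x ≤ y,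
      Function.Bijective (M.map h))
    (N N' : PersistenceModule F (ChamberPoset C)) :
    Function.Bijective
      (fun α : PersHom N N' =>
        pullbackHom (chamberMap C) (chamberMap_monotone C hmem) α) :=
  statement13_general F C hmem hpart hconn N N'
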